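/- Transitive closures exist for well-founded extensional apgs: for any well-founded extensional apg X (on a type in a fixed universe) there exists a well-founded extensional apg T (on a type in the same universe) such that (i) T is transitive: for all well-founded extensional apgs W, Z, if Z ⋿ W and W ⋿ T then Z ⋿ T; (ii) every member of X is a member of T: for all W, W ⋿ X implies W ⋿ T; and (iii) T is smallest with these properties: for any well-founded extensional apg T' satisfying (i) and (ii), every W with W ⋿ T satisfies W ⋿ T'. -/

import Mathlib

universe u v

/-- A relation is (inductively) well-founded if every inductive subset is the whole type:
`S` is inductive when `x ∈ S` whenever every child of `x` is in `S`. -/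
def IsWFRel {X : Type u} (r : X → X → Prop) : Prop :=
  ∀ S : Set X, (∀ x, (∀ y, r y x → y ∈ S) → x ∈ S) → S = Set.univ

/-- A relation is extensional if nodes with the same children are equal. -/
def IsExtRel {X : Type u} (r : X → X → Prop) : Prop :=
  ∀ x y, (∀ z, r z x ↔ r z y) → x = y

/-- `Below r x` is the full subgraph `X/x` of nodes admitting a (possibly empty) path to `x`. -/
def Below {X : Type u} (r : X → X → Prop) (x : X) : Type u :=
  {z : X // Relation.ReflTransGen r z x}

/-- The induced relation on the subgraph `X/x`. -/
def belowRel {X : Type u} (r : X → X → Prop) (x : X) :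
    Below r x → Below r x → Prop :=
  fun a b => r a.1 b.1

/-- The root of the pointed subgraph `X/x`. -/
def belowRoot {X : Type u} (r : X → X → Prop) (x : X) : Below r x :=
  ⟨x, Relation.ReflTransGen.refl⟩

/-- Isomorphism of pointed graphs: a relation-preserving-and-reflecting bijection
taking the first distinguished point to the second. -/
def PIso {X : Type u} {Y : Type v} (rX : X → X → Prop) (rY : Y → Y → Prop)
    (x : X) (y : Y) : Prop :=
  ∃ f : X ≃ Y, (∀ a b, rX a b ↔ rY (f a) (f b)) ∧ f x = y

/-- A simulation of graphs. -/
def IsSimulation {X : Type u} {Y : Type v} (rX : X → X → Prop)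
    (rY : Y → Y → Prop) (f : X → Y) : Prop :=
  (∀ a b, rX a b → rY (f a) (f b)) ∧
  (∀ x y, rY y (f x) → ∃ a, rX a x ∧ f a = y)

/-- A bisimulation between graphs. -/
def IsBisimulation {X : Type u} {Y : Type v} (rX : X → X → Prop)
    (rY : Y → Y → Prop) (R : X → Y → Prop) : Prop :=
  ∀ x y, R x y →
    (∀ x', rX x' x → ∃ y', rY y' y ∧ R x' y') ∧
    (∀ y', rY y' y → ∃ x', rX x' x ∧ R x' y')

/-- A bi-entire relation. -/
def BiEntire {X : Type u} {Y : Type v} (R : X → Y → Prop) : Prop :=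
  (∀ x, ∃ y, R x y) ∧ (∀ y, ∃ x, R x y)

/-- A well-founded extensional accessible pointed graph ("apg") on a type in universe `u`. -/
structure WEApg : Type (u + 1) where
  carrier : Type u
  rel : carrier → carrier → Prop
  root : carrier
  acc : ∀ x, Relation.ReflTransGen rel x root
  wf : IsWFRel rel
  ext : IsExtRel rel

/-- Isomorphism of (the underlying pointed graphs of) apgs. -/
def WEApg.Iso (X Y : WEApg.{u}) : Prop :=
  PIso X.rel Y.rel X.root Y.root

/-- Membership of the pointed graph `(W, rW, w)` in the pointed graph `(Y, rY, y)`: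
`(W, rW, w)` is isomorphic as a pointed graph to `(Y, rY)/z` for some child `z` of `y`. -/
def MemPGAt {W : Type u} {Y : Type v} (rW : W → W → Prop) (w : W)
    (rY : Y → Y → Prop) (y : Y) : Prop :=
  ∃ z, rY z y ∧ PIso rW (belowRel rY z) w (belowRoot rY z)

/-- `X ⋿ Y` for apgs: `X` is isomorphic as a pointed graph to `Y/y` for some member
(child of the root) `y` of `Y`. -/
def WEApg.Mem (X Y : WEApg.{u}) : Prop :=
  MemPGAt X.rel X.root Y.rel Y.root

/-!
Make every proper descendant of the root of `X` a child of the root. The resulting apg `X.tc` is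
still well founded (its edges lie in the transitive closure of those of `X`) and extensional, and
below a non-root node nothing changes, so its members are exactly the `X/z` for proper descendants
`z` of the root. These are closed under membership, since the members of `X/z` are the `X/z'` for
the children `z'` of `z`; conversely any transitive `T'` containing the members of `X` contains
every such `X/z`, by induction on the length of a path from `z` to the root.
-/

open Relation

universe w

section PIso

variable {X : Type u} {Y : Type v} {Z : Type w}
  {rX : X → X → Prop} {rY : Y → Y → Prop} {rZ : Z → Z → Prop}

theorem PIso.refl (r : X → X → Prop) (x : X) : PIso r r x x :=
  ⟨Equiv.refl X, fun _ _ => Iff.rfl, rfl⟩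

theorem PIso.symm {x : X} {y : Y} (h : PIso rX rY x y) : PIso rY rX y x := by
  obtain ⟨f, hf, rfl⟩ := h
  exact ⟨f.symm, fun a b => by simp [hf], f.symm_apply_apply x⟩

theorem PIso.trans {x : X} {y : Y} {z : Z} (h₁ : PIso rX rY x y) (h₂ : PIso rY rZ y z) :
    PIso rX rZ x z := by
  obtain ⟨f, hf, rfl⟩ := h₁
  obtain ⟨g, hg, rfl⟩ := h₂
  exact ⟨f.trans g, fun a b => (hf a b).trans (hg _ _), rfl⟩

end PIso

theorem isWFRel_iff_wellFounded {X : Type u} {r : X → X → Prop} :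
    IsWFRel r ↔ WellFounded r := by
  refine ⟨fun h => ⟨fun a => ?_⟩, fun h S hS => Set.eq_univ_of_forall fun x => ?_⟩
  · have hAcc := h {x | Acc r x} fun x hx => Acc.intro x hx
    exact Set.eq_univ_iff_forall.1 hAcc a
  · exact h.induction x hS

section Below

variable {X : Type u} {Y : Type v}

theorem reflTransGen_belowRel_iff {r : X → X → Prop} {z : X} {a b : Below r z} :
    ReflTransGen (belowRel r z) a b ↔ ReflTransGen r a.1 b.1 := by
  refine ⟨fun h => h.lift Subtype.val fun _ _ => id, fun h => ?_⟩
  obtain ⟨a, ha⟩ := a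
  obtain ⟨b, hb⟩ := b
  dsimp only at h
  induction h using ReflTransGen.head_induction_on with
  | refl => rfl
  | head hac hcb ih => exact .head (show r _ _ from hac) (ih (hcb.trans hb))

theorem pIso_below_below (r : X → X → Prop) {z : X} (b : Below r z) :
    PIso (belowRel (belowRel r z) b) (belowRel r b.1)
      (belowRoot (belowRel r z) b) (belowRoot r b.1) :=
  ⟨(Equiv.subtypeEquivRight fun _ => reflTransGen_belowRel_iff).trans
      (Equiv.subtypeSubtypeEquivSubtype (q := (ReflTransGen r · b.1)) fun h => h.trans b.2),
    fun _ _ => Iff.rfl, rfl⟩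

theorem pIso_below_of_equiv {rX : X → X → Prop} {rY : Y → Y → Prop}
    (f : X ≃ Y) (hf : ∀ a b, rX a b ↔ rY (f a) (f b)) (x : X) :
    PIso (belowRel rX x) (belowRel rY (f x)) (belowRoot rX x) (belowRoot rY (f x)) := by
  have hpath : ∀ a, ReflTransGen rX a x ↔ ReflTransGen rY (f a) (f x) := fun a =>
    ⟨fun h => h.lift f fun a b => (hf a b).1, fun h => by
      simpa [Function.onFun] using h.lift f.symm fun a b hab => (hf _ _).2 (by simpa using hab)⟩
  exact ⟨f.subtypeEquiv hpath, fun a b => hf a.1 b.1, rfl⟩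

end Below

section MemPGAt

variable {V : Type u} {W : Type v} {Y : Type w} {rV : V → V → Prop} {rW : W → W → Prop}
  {v : V} {w : W}

theorem MemPGAt.of_pIso_left {rY : Y → Y → Prop} {y : Y} (e : PIso rV rW v w)
    (h : MemPGAt rW w rY y) : MemPGAt rV v rY y := by
  obtain ⟨z, hz, i⟩ := h
  exact ⟨z, hz, e.trans i⟩

theorem MemPGAt.of_pIso_right {rY : Y → Y → Prop} {y : Y}
    (h : MemPGAt rW w rV v) (e : PIso rV rY v y) : MemPGAt rW w rY y := by
  obtain ⟨c, hc, i⟩ := h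
  obtain ⟨f, hf, rfl⟩ := e
  exact ⟨f c, (hf c v).1 hc, i.trans (pIso_below_of_equiv f hf c)⟩

theorem memPGAt_below_iff {r : V → V → Prop} {z : V} :
    MemPGAt rW w (belowRel r z) (belowRoot r z) ↔ MemPGAt rW w r z := by
  constructor
  · rintro ⟨b, hb, i⟩
    exact ⟨b.1, hb, i.trans (pIso_below_below r b)⟩
  · rintro ⟨c, hc, i⟩
    exact ⟨⟨c, .single hc⟩, hc, i.trans (pIso_below_below r (⟨c, .single hc⟩ : Below r z)).symm⟩

end MemPGAt

namespace WEApg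

variable (X : WEApg.{u})

theorem wellFounded : WellFounded X.rel :=
  isWFRel_iff_wellFounded.1 X.wf

theorem not_transGen_self (z : X.carrier) : ¬ TransGen X.rel z z :=
  X.wellFounded.transGen.irrefl.irrefl z

theorem transGen_root_iff {z : X.carrier} : TransGen X.rel z X.root ↔ z ≠ X.root := by
  refine ⟨fun h hz => X.not_transGen_self z (hz ▸ h), fun hz => ?_⟩
  rcases (X.acc z).cases_head with h | ⟨c, hzc, hc⟩
  · exact absurd h hz
  · exact .head' hzc hc

theorem ne_root_of_rel {a b : X.carrier} (h : X.rel a b) : a ≠ X.root :=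
  X.transGen_root_iff.1 (.head' h (X.acc b))

theorem eq_root_of_reflTransGen_root {z : X.carrier} (h : ReflTransGen X.rel X.root z) :
    z = X.root := by
  by_contra hz
  exact X.not_transGen_self _ (.trans_right h (X.transGen_root_iff.2 hz))

def below (z : X.carrier) : WEApg.{u} where
  carrier := Below X.rel z
  rel := belowRel X.rel z
  root := belowRoot X.rel z
  acc a := reflTransGen_belowRel_iff.2 a.2
  wf := isWFRel_iff_wellFounded.2 (InvImage.wf Subtype.val X.wellFounded)
  ext a b h := Subtype.ext <| X.ext _ _ fun c =>
    ⟨fun hc => (h ⟨c, .head hc a.2⟩).1 hc, fun hc => (h ⟨c, .head hc b.2⟩).2 hc⟩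

theorem below_mem_below {a c : X.carrier} (h : X.rel a c) : (X.below a).Mem (X.below c) :=
  memPGAt_below_iff.2 ⟨a, h, PIso.refl _ _⟩

def tcRel (a b : X.carrier) : Prop :=
  X.rel a b ∨ (b = X.root ∧ a ≠ X.root)

theorem tcRel_iff_of_ne_root {a b : X.carrier} (hb : b ≠ X.root) : X.tcRel a b ↔ X.rel a b := by
  simp [tcRel, hb]

theorem tcRel_root_iff {a : X.carrier} : X.tcRel a X.root ↔ a ≠ X.root :=
  ⟨fun h => h.elim X.ne_root_of_rel And.right, fun h => .inr ⟨rfl, h⟩⟩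

theorem tcRel_le_transGen : X.tcRel ≤ TransGen X.rel := by
  rintro a b (h | ⟨rfl, ha⟩)
  · exact .single h
  · exact X.transGen_root_iff.2 ha

theorem isExtRel_tcRel : IsExtRel X.tcRel := by
  -- a non-root node would be its own child if it had the same children as the root
  have root_ne : ∀ b, b ≠ X.root → ¬ ∀ z, X.tcRel z X.root ↔ X.tcRel z b := fun b hb h =>
    X.not_transGen_self b (X.tcRel_le_transGen _ _ ((h b).1 (X.tcRel_root_iff.2 hb)))
  intro a b h
  by_cases ha : a = X.root <;> by_cases hb : b = X.root
  · rw [ha, hb]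
  · subst ha; exact absurd h (root_ne b hb)
  · subst hb; exact absurd (fun z => (h z).symm) (root_ne a ha)
  · exact X.ext a b fun z => by
      rw [← X.tcRel_iff_of_ne_root ha, ← X.tcRel_iff_of_ne_root hb]; exact h z

def tc : WEApg.{u} where
  carrier := X.carrier
  rel := X.tcRel
  root := X.root
  acc x := by
    by_cases hx : x = X.root
    · rw [hx]
    · exact .single (X.tcRel_root_iff.2 hx)
  wf := isWFRel_iff_wellFounded.2 (Subrelation.wf (X.tcRel_le_transGen _ _) X.wellFounded.transGen)
  ext := X.isExtRel_tcRel

theorem reflTransGen_tcRel_iff {a z : X.carrier} (hz : z ≠ X.root) :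
    ReflTransGen X.tcRel a z ↔ ReflTransGen X.rel a z := by
  refine ⟨fun h => ?_, ReflTransGen.mono (fun _ _ => Or.inl) _ _⟩
  induction h with
  | refl => rfl
  | tail _ hbc ih =>
    have hbc := (X.tcRel_iff_of_ne_root hz).1 hbc
    exact (ih (X.ne_root_of_rel hbc)).tail hbc

theorem pIso_below_tcRel {z : X.carrier} (hz : z ≠ X.root) :
    PIso (belowRel X.tcRel z) (belowRel X.rel z) (belowRoot X.tcRel z) (belowRoot X.rel z) := by
  refine ⟨Equiv.subtypeEquivRight fun _ => X.reflTransGen_tcRel_iff hz,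
    fun a b => X.tcRel_iff_of_ne_root fun hb => hz ?_, rfl⟩
  exact X.eq_root_of_reflTransGen_root (hb ▸ (X.reflTransGen_tcRel_iff hz).1 b.2)

theorem mem_tc_iff {W : WEApg.{u}} : W.Mem X.tc ↔
    ∃ z, TransGen X.rel z X.root ∧ PIso W.rel (belowRel X.rel z) W.root (belowRoot X.rel z) := by
  constructor
  · rintro ⟨z, hz, i⟩
    have hz : z ≠ X.root := X.tcRel_root_iff.1 hz
    exact ⟨z, X.transGen_root_iff.2 hz, i.trans (X.pIso_below_tcRel hz)⟩
  · rintro ⟨z, hz, i⟩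
    have hz := X.transGen_root_iff.1 hz
    exact ⟨z, X.tcRel_root_iff.2 hz, i.trans (X.pIso_below_tcRel hz).symm⟩

def IsTransitive (T : WEApg.{u}) : Prop :=
  ∀ W Z : WEApg.{u}, Z.Mem W → W.Mem T → Z.Mem T

theorem tc_isTransitive : X.tc.IsTransitive := by
  intro W Z hZW hWT
  obtain ⟨z, hz, hW⟩ := X.mem_tc_iff.1 hWT
  obtain ⟨z', hz'z, hZ⟩ := memPGAt_below_iff.1 (MemPGAt.of_pIso_right hZW hW)
  exact X.mem_tc_iff.2 ⟨z', .head hz'z hz, hZ⟩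

theorem mem_tc_of_mem {W : WEApg.{u}} (h : W.Mem X) : W.Mem X.tc := by
  obtain ⟨z, hz, hW⟩ := h
  exact X.mem_tc_iff.2 ⟨z, .single hz, hW⟩

theorem below_mem_of_transGen {T : WEApg.{u}} (hT : T.IsTransitive)
    (hXT : ∀ W : WEApg.{u}, W.Mem X → W.Mem T) {z : X.carrier} (hz : TransGen X.rel z X.root) :
    (X.below z).Mem T := by
  induction hz using TransGen.head_induction_on with
  | single h => exact hXT _ ⟨_, h, PIso.refl _ _⟩
  | head h _ ih => exact hT _ _ (X.below_mem_below h) ih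

theorem mem_of_mem_tc {T : WEApg.{u}} (hT : T.IsTransitive)
    (hXT : ∀ W : WEApg.{u}, W.Mem X → W.Mem T) {W : WEApg.{u}} (h : W.Mem X.tc) : W.Mem T := by
  obtain ⟨z, hz, hW⟩ := X.mem_tc_iff.1 h
  exact MemPGAt.of_pIso_left hW (X.below_mem_of_transGen hT hXT hz)

end WEApg

/-- Transitive closures exist for well-founded extensional apgs. -/
theorem weapg_transitive_closure (X : WEApg.{u}) :
    ∃ T : WEApg.{u},
      (∀ W Z : WEApg.{u}, Z.Mem W → W.Mem T → Z.Mem T) ∧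
      (∀ W : WEApg.{u}, W.Mem X → W.Mem T) ∧
      (∀ T' : WEApg.{u},
        ((∀ W Z : WEApg.{u}, Z.Mem W → W.Mem T' → Z.Mem T') ∧
         (∀ W : WEApg.{u}, W.Mem X → W.Mem T')) →
        ∀ W : WEApg.{u}, W.Mem T → W.Mem T') :=
  ⟨X.tc, X.tc_isTransitive, fun _ => X.mem_tc_of_mem,
    fun _ ⟨hT, hXT⟩ _ => X.mem_of_mem_tc hT hXT⟩
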